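/- arXiv:2001.01380 — 5 statements merged into one kernel-verified Lean document; each statement's English description precedes it below -/
import Mathlib

section
/- In the localization of U(𝔰ₙ) at the Ore set {fⁱ : i ∈ ℤ₊}, if γ_b(u) = ∑_{j≥0} C(b,j) (ad f)ʲ(u) f⁻ʲ (a finite sum since ad f is locally nilpotent), then γ_b(e) = e + b(1 - b - h)f⁻¹ and γ_b(xᵢ) = xᵢ + b yᵢ f⁻¹ for each 1 ≤ i ≤ n and b ∈ ℂ. -/
/-- The generalized binomial coefficient `C(b,j) = b(b-1)⋯(b-j+1)/j!`. -/
noncomputable def genBinom (b : ℂ) (j : ℕ) : ℂ :=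
  (∏ k ∈ Finset.range j, (b - k)) / (j.factorial : ℂ)

/-- In the localization `U(𝔰ₙ)_f` (an associative algebra where `f` is invertible and the
Schrödinger relations hold), the twisted elements
`γ_b(u) = ∑_{j≥0} C(b,j)(ad f)ʲ(u) f⁻ʲ` satisfy
`γ_b(e) = e + b(1 - b - h)f⁻¹` and `γ_b(xᵢ) = xᵢ + b yᵢ f⁻¹`.
The sums are finite since `ad f` is locally nilpotent: they stabilize, so we state the
identity for every truncation `∑_{j<N}` with `N` large enough. -/
theorem twisted_localization_formulas (n : ℕ) (A : Type*) [Ring A] [Algebra ℂ A]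
    (e f h finv : A) (x y : Fin n → A)
    (hef : e * f - f * e = h)
    (hhf : h * f - f * h = -((2 : ℂ) • f))
    (hfx : ∀ i, f * x i - x i * f = y i)
    (hfy : ∀ i, f * y i - y i * f = 0)
    (hfinv : f * finv = 1) (hinvf : finv * f = 1) (b : ℂ) :
    (∀ N : ℕ, 3 ≤ N →
      ∑ j ∈ Finset.range N,
          genBinom b j • ((fun u => f * u - u * f)^[j] e) * finv ^ j =
        e + b • ((1 - (b : ℂ) • (1 : A) - h) * finv)) ∧
    (∀ i : Fin n, ∀ N : ℕ, 2 ≤ N →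
      ∑ j ∈ Finset.range N,
          genBinom b j • ((fun u => f * u - u * f)^[j] (x i)) * finv ^ j =
        x i + b • (y i * finv)) := by
  set φ : A → A := fun u => f * u - u * f with hφ
  have g0 : genBinom b 0 = 1 := by simp [genBinom]
  have g1 : genBinom b 1 = b := by simp [genBinom]
  have g2 : genBinom b 2 = b * (b - 1) / 2 := by
    simp [genBinom, Finset.prod_range_succ]
  have hφ0 : φ 0 = 0 := by simp [hφ]
  have h1 : φ e = -h := by
    simp only [hφ]; rw [← hef]; noncomm_ring
  have h2 : φ (-h) = -((2 : ℂ) • f) := by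
    simp only [hφ]; rw [← hhf]; noncomm_ring
  have h3 : φ (-((2 : ℂ) • f)) = 0 := by
    simp only [hφ, mul_neg, neg_mul, mul_smul_comm, smul_mul_assoc]
    abel
  have he3 : φ^[3] e = 0 := by
    simp [Function.iterate_succ_apply', h1, h2, h3]
  have hej : ∀ j, 3 ≤ j → φ^[j] e = 0 := by
    intro j hj
    induction j, hj using Nat.le_induction with
    | base => exact he3
    | succ j hj ih => rw [Function.iterate_succ_apply', ih, hφ0]
  constructor
  · intro N hN
    rw [← Finset.sum_subset (Finset.range_subset_range.2 hN)
        (fun j _ hj => by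
          rw [hej j (by simpa using hj)]
          simp)]
    rw [Finset.sum_range_succ, Finset.sum_range_succ, Finset.sum_range_one]
    rw [show φ^[1] e = -h from by simp [h1],
        show φ^[2] e = -((2:ℂ) • f) from by
          simp [Function.iterate_succ_apply', h1, h2],
        show φ^[0] e = e from rfl, g0, g1, g2]
    have hff2 : f * finv ^ 2 = finv := by
      rw [pow_two, ← mul_assoc, hfinv, one_mul]
    rw [pow_zero, pow_one]
    rw [one_smul, mul_one]
    have : (b * (b - 1) / 2) • -((2:ℂ) • f) * finv ^ 2
        = (b - b * b) • finv := by
      rw [smul_neg, smul_smul, neg_mul, smul_mul_assoc, hff2, ← neg_smul]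
      congr 1; ring
    rw [this]
    simp only [mul_sub, sub_mul, one_mul, smul_mul_assoc, smul_sub, smul_smul,
      smul_neg, neg_mul]
    module
  · intro i N hN
    have hx1 : φ (x i) = y i := hfx i
    have hx2 : φ (y i) = 0 := hfy i
    have hxj : ∀ j, 2 ≤ j → φ^[j] (x i) = 0 := by
      intro j hj
      induction j, hj using Nat.le_induction with
      | base => simp [Function.iterate_succ_apply', hx1, hx2]
      | succ j hj ih => rw [Function.iterate_succ_apply', ih, hφ0]
    rw [← Finset.sum_subset (Finset.range_subset_range.2 hN)
        (fun j _ hj => by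
          rw [hxj j (by simp at hj; omega)]
          simp)]
    rw [Finset.sum_range_succ, Finset.sum_range_one]
    rw [show φ^[1] (x i) = y i from by simp [hx1],
        show φ^[0] (x i) = x i from rfl, g0, g1]
    rw [pow_zero, pow_one, one_smul, mul_one, smul_mul_assoc]
end

section
/- Let M be a module over a Lie algebra 𝔤 and x ∈ 𝔤 such that ad x acts locally nilpotently on U(𝔤). If M is an irreducible 𝔤-module, then the action of x on M is either injective or locally nilpotent. -/
/-- If `X^n v = 0` then `X^p v = 0` for any `p ≥ n`. -/
lemma aux_pow_stable {R M : Type*} [CommRing R] [AddCommGroup M] [Module R M]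
    (X : Module.End R M) {n : ℕ} {v : M} (hv : (X ^ n) v = 0) {p : ℕ} (hp : n ≤ p) :
    (X ^ p) v = 0 := by
  obtain ⟨d, rfl⟩ := Nat.exists_eq_add_of_le hp
  rw [add_comm, pow_add, Module.End.mul_apply, hv, map_zero]

/-- Key commutation lemma: if the `K`-th iterated commutator of `X` with `Y` vanishes
and `X^m v = 0`, then `X^(m+K) (Y v) = 0`. -/
lemma aux_comm {R M : Type*} [CommRing R] [AddCommGroup M] [Module R M]
    (X Y : Module.End R M) (K m : ℕ)
    (hK : (fun u => X * u - u * X)^[K] Y = 0) (v : M) (hv : (X ^ m) v = 0) :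
    (X ^ (m + K)) (Y v) = 0 := by
  set L := LinearMap.mulLeft R X with hL
  set Rr := LinearMap.mulRight R X with hRr
  have hD : ∀ u : Module.End R M, (L - Rr) u = X * u - u * X := by
    intro u; simp [hL, hRr]
  have hDiter : ∀ (k : ℕ) (u : Module.End R M),
      ((L - Rr) ^ k) u = (fun w => X * w - w * X)^[k] u := by
    intro k
    induction k with
    | zero => intro u; simp
    | succ k ih =>
      intro u
      rw [pow_succ', Module.End.mul_apply, Function.iterate_succ_apply', ih, hD]
  have hcomm : Commute (L - Rr) Rr :=
    (LinearMap.commute_mulLeft_right (R := R) X X).sub_left (Commute.refl Rr)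
  have key : L ^ (m + K) =
      ∑ k ∈ Finset.range (m + K + 1),
        (L - Rr) ^ k * Rr ^ (m + K - k) * ((m + K).choose k : Module.End R (Module.End R M)) := by
    have := hcomm.add_pow (m + K)
    rwa [sub_add_cancel] at this
  have hXY : X ^ (m + K) * Y = (L ^ (m + K)) Y := by
    rw [LinearMap.pow_mulLeft]; rfl
  have expand : (X ^ (m + K)) (Y v) = ((X ^ (m + K) * Y)) v := rfl
  rw [expand, hXY, key, LinearMap.sum_apply, LinearMap.sum_apply]
  apply Finset.sum_eq_zero
  intro k hk
  -- reorder: (L-Rr)^k * Rr^(m+K-k) = Rr^(m+K-k) * (L-Rr)^k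
  rw [(hcomm.pow_pow k (m + K - k)).eq]
  have : (Rr ^ (m + K - k) * (L - Rr) ^ k * ((m + K).choose k : Module.End R (Module.End R M))) Y
      = ((m + K).choose k) • ((((L - Rr) ^ k) Y) * X ^ (m + K - k)) := by
    simp only [Module.End.mul_apply, Module.End.natCast_apply, map_nsmul]
    congr 1
    rw [hRr, LinearMap.pow_mulRight]
    rfl
  rw [this, LinearMap.smul_apply, Module.End.mul_apply]
  rcases le_or_gt K k with h | h
  · -- iterated commutator vanishes
    have : (((L - Rr) ^ k) Y) = 0 := by
      rw [hDiter]
      obtain ⟨d, rfl⟩ := Nat.exists_eq_add_of_le h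
      rw [add_comm, Function.iterate_add_apply, hK, Function.iterate_fixed (by simp)]
    rw [this, LinearMap.zero_apply, smul_zero]
  · -- X^(m+K-k) v = 0 since m + K - k ≥ m
    have hle : m ≤ m + K - k := by omega
    rw [aux_pow_stable X hv hle, map_zero, smul_zero]

open UniversalEnvelopingAlgebra in
/-- If `ad x` acts locally nilpotently on `U(𝔤)` and `M` is an irreducible `𝔤`-module,
then `x` acts on `M` either injectively or locally nilpotently. -/
theorem injective_or_locally_nilpotent (𝔤 : Type*) [LieRing 𝔤] [LieAlgebra ℂ 𝔤]
    (M : Type*) [AddCommGroup M] [Module ℂ M] [LieRingModule 𝔤 M] [LieModule ℂ 𝔤 M]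
    [LieModule.IsIrreducible ℂ 𝔤 M] (x : 𝔤)
    (had : ∀ u : UniversalEnvelopingAlgebra ℂ 𝔤, ∃ m : ℕ,
      (fun u => ι ℂ x * u - u * ι ℂ x)^[m] u = 0) :
    Function.Injective (LieModule.toEnd ℂ 𝔤 M x) ∨
      ∀ v : M, ∃ m : ℕ, ((LieModule.toEnd ℂ 𝔤 M x) ^ m) v = 0 := by
  set X := LieModule.toEnd ℂ 𝔤 M x with hX
  -- the representation map U(𝔤) → End M
  set ρ : UniversalEnvelopingAlgebra ℂ 𝔤 →ₐ[ℂ] Module.End ℂ M :=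
    UniversalEnvelopingAlgebra.lift ℂ (LieModule.toEnd ℂ 𝔤 M) with hρ
  have hρι : ∀ y : 𝔤, ρ (ι ℂ y) = LieModule.toEnd ℂ 𝔤 M y := fun y =>
    UniversalEnvelopingAlgebra.lift_ι_apply ℂ (LieModule.toEnd ℂ 𝔤 M) y
  have hρiter : ∀ (m : ℕ) (u : UniversalEnvelopingAlgebra ℂ 𝔤),
      ρ ((fun u => ι ℂ x * u - u * ι ℂ x)^[m] u)
        = (fun A => X * A - A * X)^[m] (ρ u) := by
    intro m
    induction m with
    | zero => intro u; simp
    | succ m ih =>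
      intro u
      rw [Function.iterate_succ_apply, Function.iterate_succ_apply, ih]
      congr 1
      rw [map_sub, map_mul, map_mul, hρι x]
  -- the set of locally nilpotent vectors is a Lie submodule
  set N : LieSubmodule ℂ 𝔤 M :=
    { carrier := {v : M | ∃ m : ℕ, (X ^ m) v = 0}
      add_mem' := by
        rintro a b ⟨p, hp⟩ ⟨q, hq⟩
        exact ⟨max p q, by
          rw [map_add, aux_pow_stable X hp (le_max_left p q),
            aux_pow_stable X hq (le_max_right p q), add_zero]⟩
      zero_mem' := ⟨0, by simp⟩
      smul_mem' := by
        rintro c a ⟨p, hp⟩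
        exact ⟨p, by rw [map_smul, hp, smul_zero]⟩
      lie_mem := by
        rintro y v ⟨p, hp⟩
        obtain ⟨K, hK⟩ := had (ι ℂ y)
        have hK' : (fun A => X * A - A * X)^[K] (LieModule.toEnd ℂ 𝔤 M y) = 0 := by
          rw [← hρι y, ← hρiter, hK, map_zero]
        exact ⟨p + K, aux_comm X (LieModule.toEnd ℂ 𝔤 M y) K p hK' v hp⟩ } with hN
  rcases eq_bot_or_eq_top N with h | h
  · -- N = ⊥ : x acts injectively
    left
    rw [← LinearMap.ker_eq_bot, LinearMap.ker_eq_bot']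
    intro v hv
    have hvN : v ∈ N := ⟨1, by rwa [pow_one]⟩
    rw [h] at hvN
    exact hvN
  · -- N = ⊤ : x acts locally nilpotently
    right
    intro v
    have : v ∈ N := by rw [h]; trivial
    exact this
end

section
/- Let V be a weight module over 𝔰𝔩₂ = span{e,f,h} with finite-dimensional weight spaces on which e acts locally nilpotently. Then for every weight λ of V there exists k ∈ ℤ₊ such that λ + 2l is not a weight of V for all l > k (i.e., the set of weights in each coset λ + 2ℤ is bounded above). -/
section
variable {V : Type*} [AddCommGroup V] [Module ℂ V]

lemma comm_apply_HE (E H : Module.End ℂ V) (hHE : ⁅H, E⁆ = (2 : ℂ) • E) (x : V) :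
    H (E x) = E (H x) + (2:ℂ) • E x := by
  have := congrArg (fun T : Module.End ℂ V => T x) hHE
  simp only [Ring.lie_def, LinearMap.sub_apply, Module.End.mul_apply,
    LinearMap.smul_apply] at this
  rw [← this]; abel

lemma comm_apply_HF (F H : Module.End ℂ V) (hHF : ⁅H, F⁆ = -((2 : ℂ) • F)) (x : V) :
    H (F x) = F (H x) - (2:ℂ) • F x := by
  have := congrArg (fun T : Module.End ℂ V => T x) hHF
  simp only [Ring.lie_def, LinearMap.sub_apply, Module.End.mul_apply,
    LinearMap.neg_apply, LinearMap.smul_apply] at this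
  rw [sub_eq_iff_eq_add] at this
  rw [this]; abel

lemma comm_apply_EF (E F H : Module.End ℂ V) (hEF : ⁅E, F⁆ = H) (x : V) :
    E (F x) = F (E x) + H x := by
  have := congrArg (fun T : Module.End ℂ V => T x) hEF
  simp only [Ring.lie_def, LinearMap.sub_apply, Module.End.mul_apply] at this
  rw [← this]; abel

lemma E_pow_weight (E H : Module.End ℂ V) (hHE : ⁅H, E⁆ = (2 : ℂ) • E)
    {μ : ℂ} {v : V} (hv : H v = μ • v) (n : ℕ) :
    H ((E ^ n) v) = (μ + 2 * n) • (E ^ n) v := by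
  induction n with
  | zero => simpa using hv
  | succ n ih =>
    have h1 : (E ^ (n+1)) v = E ((E ^ n) v) := by rw [pow_succ']; rfl
    rw [h1, comm_apply_HE E H hHE, ih, map_smul]
    push_cast
    rw [← h1]
    module

lemma F_pow_weight (F H : Module.End ℂ V) (hHF : ⁅H, F⁆ = -((2 : ℂ) • F))
    {μ : ℂ} {v : V} (hv : H v = μ • v) (n : ℕ) :
    H ((F ^ n) v) = (μ - 2 * n) • (F ^ n) v := by
  induction n with
  | zero => simpa using hv
  | succ n ih =>
    have h1 : (F ^ (n+1)) v = F ((F ^ n) v) := by rw [pow_succ']; rfl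
    rw [h1, comm_apply_HF F H hHF, ih, map_smul]
    push_cast
    rw [← h1]
    module


lemma EF_pow_hw (E F H : Module.End ℂ V) (hHF : ⁅H, F⁆ = -((2 : ℂ) • F))
    (hEF : ⁅E, F⁆ = H) {ν : ℂ} {w : V} (hw : H w = ν • w) (hew : E w = 0) (n : ℕ) :
    E ((F ^ (n+1)) w) = (((n:ℂ) + 1) * (ν - n)) • (F ^ n) w := by
  induction n with
  | zero =>
    have h1 : (F ^ 1) w = F w := by simp
    rw [h1, comm_apply_EF E F H hEF, hew, map_zero, hw]
    simp
  | succ n ih =>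
    have h1 : (F ^ (n+2)) w = F ((F ^ (n+1)) w) := by rw [pow_succ']; rfl
    rw [h1, comm_apply_EF E F H hEF, ih, map_smul,
      F_pow_weight F H hHF hw (n+1)]
    have h2 : (F ^ (n+1)) w = F ((F ^ n) w) := by rw [pow_succ']; rfl
    rw [h2]
    push_cast
    match_scalars
    ring

lemma EnFn_hw (E F H : Module.End ℂ V) (hHF : ⁅H, F⁆ = -((2 : ℂ) • F))
    (hEF : ⁅E, F⁆ = H) {ν : ℂ} {w : V} (hw : H w = ν • w) (hew : E w = 0) (n : ℕ) :
    (E ^ n) ((F ^ n) w) = (∏ j ∈ Finset.range n, (((j:ℂ) + 1) * (ν - j))) • w := by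
  induction n with
  | zero => simp
  | succ n ih =>
    have h1 : (E ^ (n+1)) ((F ^ (n+1)) w) = (E ^ n) (E ((F ^ (n+1)) w)) := by
      rw [pow_succ]; rfl
    rw [h1, EF_pow_hw E F H hHF hEF hw hew n, map_smul, ih,
      Finset.prod_range_succ, smul_smul, mul_comm]

lemma EM_Fn_hw (E F H : Module.End ℂ V) (hHF : ⁅H, F⁆ = -((2 : ℂ) • F))
    (hEF : ⁅E, F⁆ = H) {ν : ℂ} {w : V} (hw : H w = ν • w) (hew : E w = 0)
    {n M : ℕ} (hnM : n < M) : (E ^ M) ((F ^ n) w) = 0 := by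
  obtain ⟨t, rfl⟩ : ∃ t, M = n + 1 + t := ⟨M - (n+1), by omega⟩
  have h1 : (E ^ (n + 1 + t)) ((F ^ n) w)
      = (E ^ t) (E ((E ^ n) ((F ^ n) w))) := by
    have : E ^ (n + 1 + t) = E ^ t * (E ^ 1 * E ^ n) := by
      rw [show n + 1 + t = t + (1 + n) by omega, pow_add, pow_add]
    rw [this, pow_one]; rfl
  rw [h1, EnFn_hw E F H hHF hEF hw hew n, map_smul, hew, smul_zero, map_zero]

lemma raise_to_hw (E H : Module.End ℂ V) (hHE : ⁅H, E⁆ = (2 : ℂ) • E)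
    (hnil : ∀ v : V, ∃ m : ℕ, (E ^ m) v = 0)
    {μ : ℂ} {v : V} (hv : H v = μ • v) (hv0 : v ≠ 0) :
    ∃ n : ℕ, ∃ w : V, w ≠ 0 ∧ H w = (μ + 2 * n) • w ∧ E w = 0 := by
  classical
  have hex := hnil v
  have hm0 : Nat.find hex ≠ 0 := fun h => hv0 (by simpa [h] using Nat.find_spec hex)
  refine ⟨Nat.find hex - 1, (E ^ (Nat.find hex - 1)) v, ?_, E_pow_weight E H hHE hv _, ?_⟩
  · exact Nat.find_min hex (by omega)
  · have hs := Nat.find_spec hex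
    have hk : Nat.find hex - 1 + 1 = Nat.find hex := by omega
    calc E ((E ^ (Nat.find hex - 1)) v) = (E ^ (Nat.find hex - 1 + 1)) v := by
          rw [pow_succ']; rfl
      _ = 0 := by rw [hk]; exact hs

end


/-- Let `V` be a weight module over `𝔰𝔩₂ = span{e,f,h}` with finite dimensional weight
spaces on which `e` acts locally nilpotently. Then for every weight `λ` of `V` there is
`k ∈ ℤ₊` such that `λ + 2l` is not a weight for all `l > k`. -/
theorem sl2_weights_bounded_above (V : Type*) [AddCommGroup V] [Module ℂ V]
    (E F H : Module.End ℂ V)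
    (hHE : ⁅H, E⁆ = (2 : ℂ) • E) (hHF : ⁅H, F⁆ = -((2 : ℂ) • F)) (hEF : ⁅E, F⁆ = H)
    (hweight : (⨆ μ : ℂ, H.eigenspace μ) = ⊤)
    (hfd : ∀ μ : ℂ, FiniteDimensional ℂ (H.eigenspace μ))
    (hnil : ∀ v : V, ∃ m : ℕ, (E ^ m) v = 0) :
    ∀ lam : ℂ, H.eigenspace lam ≠ ⊥ →
      ∃ k : ℕ, ∀ l : ℕ, l > k → H.eigenspace (lam + 2 * l) = ⊥ := by
  classical
  intro lam _hlam
  by_contra hcon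
  push_neg at hcon
  -- arbitrarily high highest-weight vectors
  have hhw : ∀ k : ℕ, ∃ N : ℕ, N > k ∧ ∃ w : V, w ≠ 0 ∧
      H w = (lam + 2 * N) • w ∧ E w = 0 := by
    intro k
    obtain ⟨l, hl, hne⟩ := hcon k
    obtain ⟨v, hvmem, hv0⟩ := Submodule.exists_mem_ne_zero_of_ne_bot hne
    rw [Module.End.mem_eigenspace_iff] at hvmem
    obtain ⟨n, w, hw0, hww, hew⟩ := raise_to_hw E H hHE hnil hvmem hv0
    refine ⟨l + n, by omega, w, hw0, ?_, hew⟩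
    have hsc : lam + 2 * (l:ℂ) + 2 * (n:ℂ) = lam + 2 * ((l + n : ℕ) : ℂ) := by
      push_cast; ring
    rw [hww, hsc]
  choose Nf hNgt wf hwf0 hwfH hwfE using hhw
  set C : ℕ := ⌈-lam.re⌉₊ with hCdef
  -- recursively chosen strictly increasing weights
  let a : ℕ → ℕ := fun i => Nat.rec C (fun _ p => Nf p) i
  let g : ℕ → ℕ := fun i => Nf (a i)
  have hgmono : StrictMono g := strictMono_nat_of_lt_succ fun i => hNgt (g i)
  have hgC : ∀ i, C < g i := by
    intro i
    induction i with
    | zero => exact hNgt C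
    | succ i ih => exact lt_trans ih (hNgt (g i))
  -- the vectors
  let w : ℕ → V := fun i => wf (a i)
  let u : ℕ → V := fun i => (F ^ (g i)) (w i)
  have hwH : ∀ i, H (w i) = (lam + 2 * (g i : ℂ)) • w i := fun i => hwfH (a i)
  have hwE : ∀ i, E (w i) = 0 := fun i => hwfE (a i)
  have hw0 : ∀ i, w i ≠ 0 := fun i => hwf0 (a i)
  let c : ℕ → ℂ := fun i =>
    ∏ j ∈ Finset.range (g i), (((j:ℂ) + 1) * ((lam + 2 * (g i : ℂ)) - j))
  have hc0 : ∀ i, c i ≠ 0 := by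
    intro i
    refine Finset.prod_ne_zero_iff.mpr fun j hj => mul_ne_zero
      (Nat.cast_add_one_ne_zero j) fun h0 => ?_
    have hre := congrArg Complex.re h0
    simp only [Complex.sub_re, Complex.add_re, Complex.mul_re, Complex.re_ofNat,
      Complex.natCast_re, Complex.im_ofNat, Complex.natCast_im, Complex.zero_re,
      mul_zero, sub_zero] at hre
    rw [Finset.mem_range] at hj
    have h1 : (-lam.re : ℝ) ≤ C := Nat.le_ceil _
    have h2 : ((C : ℝ)) + 1 ≤ (g i : ℝ) := by exact_mod_cast hgC i
    have h3 : ((j : ℝ)) + 1 ≤ (g i : ℝ) := by exact_mod_cast hj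
    linarith
  have hEu : ∀ i, (E ^ (g i)) (u i) = c i • w i := fun i =>
    EnFn_hw E F H hHF hEF (hwH i) (hwE i) (g i)
  have hEu0 : ∀ i, (E ^ (g i)) (u i) ≠ 0 := fun i => by
    rw [hEu i]; exact smul_ne_zero (hc0 i) (hw0 i)
  have hkill : ∀ i r : ℕ, i < r → (E ^ (g r)) (u i) = 0 := fun i r hir =>
    EM_Fn_hw E F H hHF hEF (hwH i) (hwE i) (hgmono hir)
  have humem : ∀ i, u i ∈ H.eigenspace lam := by
    intro i
    rw [Module.End.mem_eigenspace_iff]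
    have := F_pow_weight F H hHF (hwH i) (g i)
    have hsc : lam + 2 * (g i : ℂ) - 2 * (g i : ℂ) = lam := by ring
    rwa [hsc] at this
  -- the chain of spans
  let S : ℕ → Submodule ℂ V := fun r => Submodule.span ℂ (u '' Set.Iio r)
  have hS_le : ∀ r, S r ≤ H.eigenspace lam := by
    intro r
    rw [Submodule.span_le]
    rintro _ ⟨i, _, rfl⟩
    exact humem i
  haveI := hfd lam
  haveI : ∀ r, FiniteDimensional ℂ (S r) := fun r =>
    Submodule.finiteDimensional_of_le (hS_le r)
  have hnotmem : ∀ r, u r ∉ S r := by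
    intro r hin
    have hker : S r ≤ LinearMap.ker ((E ^ (g r) : Module.End ℂ V)) := by
      rw [Submodule.span_le]
      rintro _ ⟨i, hi, rfl⟩
      exact hkill i r hi
    exact hEu0 r (hker hin)
  have hSmono : StrictMono S := by
    apply strictMono_nat_of_lt_succ
    intro r
    refine lt_of_le_of_ne (Submodule.span_mono (Set.image_mono fun x hx =>
      lt_trans hx (Nat.lt_succ_self r))) fun he => ?_
    exact hnotmem r (he ▸ Submodule.subset_span ⟨r, Nat.lt_succ_self r, rfl⟩)
  have hrank : ∀ r, r ≤ Module.finrank ℂ (S r) := by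
    intro r
    induction r with
    | zero => exact Nat.zero_le _
    | succ r ih =>
      exact Nat.succ_le_of_lt (lt_of_le_of_lt ih
        (Submodule.finrank_lt_finrank_of_lt (hSmono (Nat.lt_succ_self r))))
  have hbound : ∀ r, Module.finrank ℂ (S r) ≤ Module.finrank ℂ (H.eigenspace lam) :=
    fun r => Submodule.finrank_mono (hS_le r)
  have := hrank (Module.finrank ℂ (H.eigenspace lam) + 1)
  have := hbound (Module.finrank ℂ (H.eigenspace lam) + 1)
  omega
end

section
/- Every irreducible weight module over the rank-one Weyl algebra 𝔻₁ (generated by t and ∂ with [∂,t]=1) is isomorphic to exactly one of: (i) t^λ ℂ[t^{±1}] for some λ ∈ ℂ \ ℤ (with λ unique modulo ℤ), (ii) ℂ[t], or (iii) ℂ[t^{±1}]/ℂ[t]. -/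
/-- An isomorphism of modules over the rank-one Weyl algebra `𝔻₁`, given by their
`t`- and `∂`-operators: a linear equivalence intertwining both actions. -/
def WeylIso (V₁ : Type*) [AddCommGroup V₁] [Module ℂ V₁] (T₁ D₁ : Module.End ℂ V₁)
    (V₂ : Type*) [AddCommGroup V₂] [Module ℂ V₂] (T₂ D₂ : Module.End ℂ V₂) : Prop :=
  ∃ φ : V₁ ≃ₗ[ℂ] V₂, ∀ v : V₁, φ (T₁ v) = T₂ (φ v) ∧ φ (D₁ v) = D₂ (φ v)

/-- `t` acting on `tᵏℂ[t^{±1}]` (basis `tᵏ`, `k ∈ ℤ`): `t·tᵏ = tᵏ⁺¹`. -/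
noncomputable def laurentT : Module.End ℂ (ℤ →₀ ℂ) :=
  Finsupp.lsum ℂ fun m => Finsupp.lsingle (m + 1)

/-- `∂` acting on `t^λℂ[t^{±1}]` (basis `t^{λ+m}`, `m ∈ ℤ`): `∂·t^{λ+m} = (λ+m)t^{λ+m-1}`. -/
noncomputable def laurentD (lam : ℂ) : Module.End ℂ (ℤ →₀ ℂ) :=
  Finsupp.lsum ℂ fun m => (lam + m : ℂ) • Finsupp.lsingle (m - 1)

/-- `t` acting on `ℂ[t]` (basis `tᵏ`, `k ∈ ℤ≥0`). -/
noncomputable def polyT : Module.End ℂ (ℕ →₀ ℂ) :=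
  Finsupp.lsum ℂ fun k => Finsupp.lsingle (k + 1)

/-- `∂` acting on `ℂ[t]`: `∂·tᵏ = k·tᵏ⁻¹`. -/
noncomputable def polyD : Module.End ℂ (ℕ →₀ ℂ) :=
  Finsupp.lsum ℂ fun k => (k : ℂ) • Finsupp.lsingle (k - 1)

/-- `t` acting on `ℂ[t^{±1}]/ℂ[t]` (basis the classes of `t^{-(k+1)}`, `k ∈ ℤ≥0`). -/
noncomputable def quotT : Module.End ℂ (ℕ →₀ ℂ) :=
  Finsupp.lsum ℂ fun k => if k = 0 then 0 else Finsupp.lsingle (k - 1)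

/-- `∂` acting on `ℂ[t^{±1}]/ℂ[t]`: `∂·t^{-(k+1)} = -(k+1)·t^{-(k+2)}`. -/
noncomputable def quotD : Module.End ℂ (ℕ →₀ ℂ) :=
  Finsupp.lsum ℂ fun k => (-(k + 1) : ℂ) • Finsupp.lsingle (k + 1)

section Aux

open Module

variable {V : Type*} [AddCommGroup V] [Module ℂ V]

/-- `μ` is an eigenvalue of the operator `T ∘ D`. -/
def HasEig (T D : Module.End ℂ V) (μ : ℂ) : Prop :=
  ∃ w : V, w ≠ 0 ∧ T (D w) = μ • w

lemma weylIso_symm {V₁ : Type*} [AddCommGroup V₁] [Module ℂ V₁] {T₁ D₁ : Module.End ℂ V₁}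
    {V₂ : Type*} [AddCommGroup V₂] [Module ℂ V₂] {T₂ D₂ : Module.End ℂ V₂}
    (h : WeylIso V₁ T₁ D₁ V₂ T₂ D₂) : WeylIso V₂ T₂ D₂ V₁ T₁ D₁ := by
  obtain ⟨φ, hφ⟩ := h
  refine ⟨φ.symm, fun v => ⟨?_, ?_⟩⟩
  · conv_lhs => rw [show T₂ v = φ (T₁ (φ.symm v)) by rw [(hφ _).1, φ.apply_symm_apply]]
    exact φ.symm_apply_apply _
  · conv_lhs => rw [show D₂ v = φ (D₁ (φ.symm v)) by rw [(hφ _).2, φ.apply_symm_apply]]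
    exact φ.symm_apply_apply _

lemma weylIso_hasEig {V₁ : Type*} [AddCommGroup V₁] [Module ℂ V₁] {T₁ D₁ : Module.End ℂ V₁}
    {V₂ : Type*} [AddCommGroup V₂] [Module ℂ V₂] {T₂ D₂ : Module.End ℂ V₂}
    (h : WeylIso V₁ T₁ D₁ V₂ T₂ D₂) {μ : ℂ} (hE : HasEig T₁ D₁ μ) : HasEig T₂ D₂ μ := by
  obtain ⟨φ, hφ⟩ := h
  obtain ⟨w, hw, he⟩ := hE
  refine ⟨φ w, by simp [hw], ?_⟩
  rw [← (hφ w).2, ← (hφ _).1, he, map_smul]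

lemma laurentTD_apply (lam : ℂ) (w : ℤ →₀ ℂ) (j : ℤ) :
    laurentT (laurentD lam w) j = (lam + j) * w j := by
  induction w using Finsupp.induction_linear with
  | zero => simp
  | add f g hf hg => simp only [map_add, Finsupp.add_apply, hf, hg]; ring
  | single m c =>
    simp only [laurentD, laurentT, Finsupp.lsum_single, LinearMap.smul_apply,
      Finsupp.lsingle_apply, map_smul, Finsupp.smul_apply, sub_add_cancel,
      Finsupp.single_apply]
    rcases eq_or_ne m j with rfl | h
    · simp
    · simp [h]

lemma polyTD_apply (w : ℕ →₀ ℂ) (j : ℕ) :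
    polyT (polyD w) j = (j : ℂ) * w j := by
  induction w using Finsupp.induction_linear with
  | zero => simp
  | add f g hf hg => simp only [map_add, Finsupp.add_apply, hf, hg]; ring
  | single k c =>
    simp only [polyD, polyT, Finsupp.lsum_single, LinearMap.smul_apply,
      Finsupp.lsingle_apply, map_smul, Finsupp.smul_apply, Finsupp.single_apply]
    cases k with
    | zero =>
      rcases eq_or_ne j 0 with rfl | h
      · simp
      · simp [Ne.symm h]
    | succ k =>
      simp only [Nat.add_sub_cancel, Nat.cast_add, Nat.cast_one]
      rcases eq_or_ne (k+1) j with rfl | h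
      · simp
      · simp [h]

lemma quotTD_apply (w : ℕ →₀ ℂ) (j : ℕ) :
    quotT (quotD w) j = (-(j+1) : ℂ) * w j := by
  induction w using Finsupp.induction_linear with
  | zero => simp
  | add f g hf hg => simp only [map_add, Finsupp.add_apply, hf, hg]; ring
  | single k c =>
    simp only [quotD, quotT, Finsupp.lsum_single, LinearMap.smul_apply,
      Finsupp.lsingle_apply, map_smul, Finsupp.smul_apply, Nat.succ_ne_zero,
      if_false, Nat.add_sub_cancel, Finsupp.single_apply]
    rcases eq_or_ne k j with rfl | h
    · simp
    · simp [h]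

lemma hasEig_laurent {lam μ : ℂ} (h : HasEig laurentT (laurentD lam) μ) :
    ∃ m : ℤ, μ = lam + m := by
  obtain ⟨w, hw, he⟩ := h
  obtain ⟨j, hj⟩ := Finsupp.ne_iff.1 hw
  simp only [Finsupp.coe_zero, Pi.zero_apply] at hj
  refine ⟨j, ?_⟩
  have h1 : (lam + j) * w j = μ * w j := by
    rw [← laurentTD_apply, he]; simp
  exact (mul_right_cancel₀ hj h1).symm

lemma hasEig_poly {μ : ℂ} (h : HasEig polyT polyD μ) : ∃ j : ℕ, μ = j := by
  obtain ⟨w, hw, he⟩ := h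
  obtain ⟨j, hj⟩ := Finsupp.ne_iff.1 hw
  simp only [Finsupp.coe_zero, Pi.zero_apply] at hj
  refine ⟨j, ?_⟩
  have h1 : (j : ℂ) * w j = μ * w j := by
    rw [← polyTD_apply, he]; simp
  exact (mul_right_cancel₀ hj h1).symm

lemma hasEig_quot {μ : ℂ} (h : HasEig quotT quotD μ) : ∃ j : ℕ, μ = -(j+1) := by
  obtain ⟨w, hw, he⟩ := h
  obtain ⟨j, hj⟩ := Finsupp.ne_iff.1 hw
  simp only [Finsupp.coe_zero, Pi.zero_apply] at hj
  refine ⟨j, ?_⟩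
  have h1 : (-(j+1) : ℂ) * w j = μ * w j := by
    rw [← quotTD_apply, he]; simp
  exact (mul_right_cancel₀ hj h1).symm

lemma poly_hasEig_zero : HasEig polyT polyD 0 := by
  refine ⟨Finsupp.single 0 1, by simp, ?_⟩
  ext j
  rw [polyTD_apply]
  rcases eq_or_ne j 0 with rfl | h
  · simp
  · simp [Finsupp.single_apply, Ne.symm h]

lemma quot_hasEig_neg_one : HasEig quotT quotD (-1) := by
  refine ⟨Finsupp.single 0 1, by simp, ?_⟩
  ext j
  rw [quotTD_apply]
  rcases eq_or_ne j 0 with rfl | h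
  · simp
  · simp [Finsupp.single_apply, Ne.symm h]

lemma build_basis {ι : Type*} [Nonempty ι] (T D : Module.End ℂ V)
    (hirr : ∀ N : Submodule ℂ V, (∀ v ∈ N, T v ∈ N ∧ D v ∈ N) → N = ⊥ ∨ N = ⊤)
    (e : ι → V) (wt : ι → ℂ) (hinj : Function.Injective wt)
    (hne : ∀ i, e i ≠ 0) (heig : ∀ i, T (D (e i)) = wt i • e i)
    (hT : ∀ i, T (e i) ∈ Submodule.span ℂ (Set.range e))
    (hD : ∀ i, D (e i) ∈ Submodule.span ℂ (Set.range e)) :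
    ∃ b : Basis ι ℂ V, ∀ i, b i = e i := by
  have hli : LinearIndependent ℂ e :=
    (T * D).eigenvectors_linearIndependent' wt hinj e (fun i =>
      Module.End.hasEigenvector_iff.2
        ⟨Module.End.mem_eigenspace_iff.2 (by simpa [Module.End.mul_apply] using heig i), hne i⟩)
  have hNT : ∀ v ∈ Submodule.span ℂ (Set.range e),
      T v ∈ Submodule.span ℂ (Set.range e) ∧ D v ∈ Submodule.span ℂ (Set.range e) := by
    have hmapT : (Submodule.span ℂ (Set.range e)).map T ≤ Submodule.span ℂ (Set.range e) := by
      rw [Submodule.map_span, Submodule.span_le]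
      rintro x ⟨y, ⟨i, rfl⟩, rfl⟩; exact hT i
    have hmapD : (Submodule.span ℂ (Set.range e)).map D ≤ Submodule.span ℂ (Set.range e) := by
      rw [Submodule.map_span, Submodule.span_le]
      rintro x ⟨y, ⟨i, rfl⟩, rfl⟩; exact hD i
    exact fun v hv => ⟨hmapT (Submodule.mem_map_of_mem hv), hmapD (Submodule.mem_map_of_mem hv)⟩
  rcases hirr _ hNT with hbot | htop
  · exfalso
    have := Submodule.subset_span (R := ℂ) (Set.mem_range_self (f := e) (Classical.arbitrary ι))
    rw [hbot] at this
    exact hne _ (by simpa using this)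
  · exact ⟨Basis.mk hli htop.ge, fun i => Basis.mk_apply hli htop.ge i⟩

lemma basis_iso {ι : Type*} (T D : Module.End ℂ V) (T₂ D₂ : Module.End ℂ (ι →₀ ℂ))
    (b : Basis ι ℂ V)
    (hT : ∀ i, b.repr (T (b i)) = T₂ (Finsupp.single i 1))
    (hD : ∀ i, b.repr (D (b i)) = D₂ (Finsupp.single i 1)) :
    WeylIso V T D (ι →₀ ℂ) T₂ D₂ := by
  have hT' : (b.repr.toLinearMap ∘ₗ T) = (T₂ ∘ₗ b.repr.toLinearMap) :=
    b.ext fun i => by simpa [Basis.repr_self] using hT i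
  have hD' : (b.repr.toLinearMap ∘ₗ D) = (D₂ ∘ₗ b.repr.toLinearMap) :=
    b.ext fun i => by simpa [Basis.repr_self] using hD i
  exact ⟨b.repr, fun v =>
    ⟨by simpa using LinearMap.congr_fun hT' v, by simpa using LinearMap.congr_fun hD' v⟩⟩

end Aux

section Cases

open Module

variable {V : Type*} [AddCommGroup V] [Module ℂ V]

lemma comm_aux {T D : Module.End ℂ V} (hDT : D * T - T * D = 1) (x : V) :
    D (T x) = T (D x) + x := by
  have h := DFunLike.congr_fun hDT x
  simp only [LinearMap.sub_apply, Module.End.mul_apply, Module.End.one_apply] at h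
  rw [sub_eq_iff_eq_add] at h
  rw [h, add_comm]

lemma laurent_case (T D : Module.End ℂ V)
    (hDT : D * T - T * D = 1)
    (hirr : ∀ N : Submodule ℂ V, (∀ v ∈ N, T v ∈ N ∧ D v ∈ N) → N = ⊥ ∨ N = ⊤)
    {lam : ℂ} (hlam : ∀ m : ℤ, lam ≠ (m : ℂ))
    (v : V) (hv : v ≠ 0) (hveig : T (D v) = lam • v) :
    WeylIso V T D (ℤ →₀ ℂ) laurentT (laurentD lam) := by
  have hDTa : ∀ x : V, D (T x) = T (D x) + x := comm_aux hDT
  have hHT : ∀ x : V, T (D (T x)) = T (T (D x)) + T x := fun x => by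
    rw [hDTa x, map_add]
  have hHD : ∀ x : V, T (D (D x)) = D (T (D x)) - D x := fun x => by
    rw [hDTa (D x)]; abel
  have hlamZ : ∀ z : ℤ, lam + (z : ℂ) ≠ 0 := fun z h =>
    hlam (-z) (by push_cast; exact eq_neg_of_add_eq_zero_left h)
  have hlamN : ∀ n : ℕ, lam - (n : ℂ) ≠ 0 := fun n => by
    have := hlamZ (-(n : ℤ)); push_cast at this
    simpa [sub_eq_add_neg] using this
  set p : ℕ → V := fun n => Nat.rec v (fun _ x => T x) n with hpdef
  set q : ℕ → V := fun n => Nat.rec v (fun n x => (lam - n)⁻¹ • D x) n with hqdef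
  have hp0 : p 0 = v := rfl
  have hps : ∀ n, p (n + 1) = T (p n) := fun n => rfl
  have hq0 : q 0 = v := rfl
  have hqs : ∀ n, q (n + 1) = (lam - n)⁻¹ • D (q n) := fun n => rfl
  have hp_eig : ∀ n : ℕ, T (D (p n)) = (lam + n) • p n := by
    intro n; induction n with
    | zero => simpa [hp0] using hveig
    | succ n ih =>
      rw [hps n, hHT (p n), ih, map_smul, ← hps n]
      push_cast; module
  have hq_eig : ∀ n : ℕ, T (D (q n)) = (lam - n) • q n := by
    intro n; induction n with
    | zero => simpa [hq0] using hveig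
    | succ n ih =>
      rw [hqs n, map_smul, map_smul, hHD (q n), ih, map_smul, smul_sub, smul_smul,
        inv_mul_cancel₀ (hlamN n), one_smul, smul_smul]
      have hc : (lam - ((n + 1 : ℕ) : ℂ)) * (lam - (n : ℂ))⁻¹ = 1 - (lam - (n : ℂ))⁻¹ := by
        have h1 : (lam - ((n + 1 : ℕ) : ℂ)) = (lam - n) - 1 := by push_cast; ring
        rw [h1, sub_mul, mul_inv_cancel₀ (hlamN n), one_mul]
      rw [hc, sub_smul, one_smul]
  have hq_T : ∀ n : ℕ, T (q (n + 1)) = q n := by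
    intro n
    rw [hqs n, map_smul, hq_eig n, smul_smul, inv_mul_cancel₀ (hlamN n), one_smul]
  have hq_D : ∀ n : ℕ, D (q n) = (lam - n) • q (n + 1) := by
    intro n
    rw [hqs n, smul_smul, mul_inv_cancel₀ (hlamN n), one_smul]
  have hp_D : ∀ n : ℕ, D (p (n + 1)) = (lam + n + 1) • p n := by
    intro n
    rw [hps n, hDTa (p n), hp_eig n]
    module
  have hp_ne : ∀ n, p n ≠ 0 := by
    intro n; induction n with
    | zero => exact hv
    | succ n ih =>
      intro h
      have h2 := hp_D n
      rw [h, map_zero] at h2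
      have hz : lam + (n : ℂ) + 1 ≠ 0 := by
        have := hlamZ ((n : ℤ) + 1); push_cast at this
        simpa [add_assoc] using this
      exact ih ((smul_eq_zero.1 h2.symm).resolve_left hz)
  have hq_ne : ∀ n, q n ≠ 0 := by
    intro n; induction n with
    | zero => exact hv
    | succ n ih =>
      intro h
      exact ih (by rw [← hq_T n, h, map_zero])
  set e : ℤ → V := fun m => Int.rec (fun n => p n) (fun n => q (n + 1)) m with hedef
  have heo : ∀ n : ℕ, e (Int.ofNat n) = p n := fun n => rfl
  have hen : ∀ n : ℕ, e (Int.negSucc n) = q (n + 1) := fun n => rfl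
  have he_ne : ∀ m, e m ≠ 0 := by
    intro m; cases m with
    | ofNat n => exact hp_ne n
    | negSucc n => exact hq_ne (n + 1)
  have he_eig : ∀ m : ℤ, T (D (e m)) = (lam + (m : ℂ)) • e m := by
    intro m; cases m with
    | ofNat n =>
      rw [heo n, hp_eig n]; norm_num
    | negSucc n =>
      rw [hen n, hq_eig (n + 1), Int.cast_negSucc]
      push_cast; ring_nf
  have he_T : ∀ m : ℤ, T (e m) = e (m + 1) := by
    intro m; cases m with
    | ofNat n =>
      rw [show (Int.ofNat n) + 1 = Int.ofNat (n + 1) from rfl, heo n, heo (n + 1), hps]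
    | negSucc n =>
      cases n with
      | zero =>
        rw [show (Int.negSucc 0) + 1 = Int.ofNat 0 by decide, heo 0, hen 0]
        exact hq_T 0
      | succ n =>
        rw [show (Int.negSucc (n + 1)) + 1 = Int.negSucc n by
          simp only [Int.negSucc_eq]; push_cast; ring, hen (n + 1), hen n]
        exact hq_T (n + 1)
  have he_D : ∀ m : ℤ, D (e m) = (lam + (m : ℂ)) • e (m - 1) := by
    intro m; cases m with
    | ofNat n =>
      cases n with
      | zero =>
        rw [show (Int.ofNat 0) - 1 = Int.negSucc 0 by decide, heo 0, hen 0, hp0]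
        rw [← hq0, hq_D 0]
        norm_num
      | succ n =>
        rw [show (Int.ofNat (n + 1)) - 1 = Int.ofNat n by
          simp only [Int.ofNat_eq_coe]; push_cast; ring, heo (n + 1), heo n, hp_D n]
        rw [add_assoc]
        norm_num
    | negSucc n =>
      rw [show (Int.negSucc n) - 1 = Int.negSucc (n + 1) by
        simp only [Int.negSucc_eq]; push_cast; ring, hen n, hen (n + 1), hq_D (n + 1), Int.cast_negSucc]
      push_cast; ring_nf
  have hinj : Function.Injective (fun m : ℤ => lam + (m : ℂ)) := by
    intro a b h
    simp only [add_right_inj] at h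
    exact_mod_cast h
  obtain ⟨b, hb⟩ := build_basis T D hirr e (fun m => lam + (m : ℂ)) hinj he_ne he_eig
    (fun i => by rw [he_T i]; exact Submodule.subset_span ⟨i + 1, rfl⟩)
    (fun i => by rw [he_D i]; exact Submodule.smul_mem _ _ (Submodule.subset_span ⟨i - 1, rfl⟩))
  apply basis_iso T D laurentT (laurentD lam) b
  · intro i
    rw [hb i, he_T i, ← hb (i + 1), b.repr_self]
    rw [laurentT, Finsupp.lsum_single, Finsupp.lsingle_apply]
  · intro i
    rw [hb i, he_D i, map_smul, ← hb (i - 1), b.repr_self]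
    rw [laurentD, Finsupp.lsum_single, LinearMap.smul_apply, Finsupp.lsingle_apply]

end Cases

section Cases2

open Module

variable {V : Type*} [AddCommGroup V] [Module ℂ V]

lemma poly_case (T D : Module.End ℂ V)
    (hDT : D * T - T * D = 1)
    (hirr : ∀ N : Submodule ℂ V, (∀ v ∈ N, T v ∈ N ∧ D v ∈ N) → N = ⊥ ∨ N = ⊤)
    (w : V) (hw : w ≠ 0) (hDw : D w = 0) :
    WeylIso V T D (ℕ →₀ ℂ) polyT polyD := by
  have hDTa : ∀ x : V, D (T x) = T (D x) + x := comm_aux hDT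
  have hHT : ∀ x : V, T (D (T x)) = T (T (D x)) + T x := fun x => by
    rw [hDTa x, map_add]
  set p : ℕ → V := fun n => Nat.rec w (fun _ x => T x) n with hpdef
  have hps : ∀ n, p (n + 1) = T (p n) := fun n => rfl
  have hp_eig : ∀ n : ℕ, T (D (p n)) = (n : ℂ) • p n := by
    intro n; induction n with
    | zero =>
      show T (D w) = ((0:ℕ) : ℂ) • w
      rw [hDw, map_zero]
      simp
    | succ n ih =>
      rw [hps n, hHT (p n), ih, map_smul, ← hps n]
      push_cast; module
  have hp_D : ∀ n : ℕ, D (p (n + 1)) = ((n : ℂ) + 1) • p n := by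
    intro n
    rw [hps n, hDTa (p n), hp_eig n]
    module
  have hp_ne : ∀ n, p n ≠ 0 := by
    intro n; induction n with
    | zero => exact hw
    | succ n ih =>
      intro h
      have h2 := hp_D n
      rw [h, map_zero] at h2
      exact ih ((smul_eq_zero.1 h2.symm).resolve_left (by
        exact_mod_cast Nat.cast_add_one_ne_zero (R := ℂ) n))
  have hp_D' : ∀ n : ℕ, D (p n) = (n : ℂ) • p (n - 1) := by
    intro n
    cases n with
    | zero =>
      show D w = ((0:ℕ) : ℂ) • w
      rw [hDw]
      simp
    | succ n => rw [hp_D n, Nat.add_sub_cancel]; push_cast; ring_nf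
  have hinj : Function.Injective (fun n : ℕ => (n : ℂ)) := Nat.cast_injective
  obtain ⟨b, hb⟩ := build_basis T D hirr p (fun n => (n : ℂ)) hinj hp_ne hp_eig
    (fun i => by rw [← hps i]; exact Submodule.subset_span ⟨i + 1, rfl⟩)
    (fun i => by rw [hp_D' i]; exact Submodule.smul_mem _ _ (Submodule.subset_span ⟨i - 1, rfl⟩))
  apply basis_iso T D polyT polyD b
  · intro i
    rw [hb i, ← hps i, ← hb (i + 1), b.repr_self]
    rw [polyT, Finsupp.lsum_single, Finsupp.lsingle_apply]
  · intro i
    rw [hb i, hp_D' i, map_smul, ← hb (i - 1), b.repr_self]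
    rw [polyD, Finsupp.lsum_single, LinearMap.smul_apply, Finsupp.lsingle_apply]

lemma quot_case (T D : Module.End ℂ V)
    (hDT : D * T - T * D = 1)
    (hirr : ∀ N : Submodule ℂ V, (∀ v ∈ N, T v ∈ N ∧ D v ∈ N) → N = ⊥ ∨ N = ⊤)
    (u : V) (hu : u ≠ 0) (hTu : T u = 0) (heu : T (D u) = -u) :
    WeylIso V T D (ℕ →₀ ℂ) quotT quotD := by
  have hDTa : ∀ x : V, D (T x) = T (D x) + x := comm_aux hDT
  have hHD : ∀ x : V, T (D (D x)) = D (T (D x)) - D x := fun x => by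
    rw [hDTa (D x)]; abel
  have hcne : ∀ n : ℕ, (-((n : ℂ) + 1)) ≠ 0 := fun n h =>
    Nat.cast_add_one_ne_zero (R := ℂ) n (by linear_combination -h)
  set f : ℕ → V := fun n => Nat.rec u (fun n x => (-((n : ℂ) + 1))⁻¹ • D x) n with hfdef
  have hfs : ∀ n, f (n + 1) = (-((n : ℂ) + 1))⁻¹ • D (f n) := fun n => rfl
  have hf_eig : ∀ n : ℕ, T (D (f n)) = (-((n : ℂ) + 1)) • f n := by
    intro n; induction n with
    | zero =>
      show T (D u) = (-(((0:ℕ) : ℂ) + 1)) • u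
      rw [heu]; simp
    | succ n ih =>
      rw [hfs n, map_smul, map_smul, hHD (f n), ih, map_smul, smul_sub, smul_smul,
        inv_mul_cancel₀ (hcne n), one_smul, smul_smul]
      have hc : (-(((n:ℂ) + 1) + 1)) * (-((n : ℂ) + 1))⁻¹ = 1 - (-((n : ℂ) + 1))⁻¹ := by
        have h1 : (-(((n:ℂ) + 1) + 1)) = (-((n:ℂ) + 1)) - 1 := by ring
        rw [h1, sub_mul, mul_inv_cancel₀ (hcne n), one_mul]
      push_cast
      rw [show (-((n:ℂ) + 1 + 1)) = (-(((n:ℂ) + 1) + 1)) by ring, hc, sub_smul, one_smul]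
  have hf_T : ∀ n : ℕ, T (f (n + 1)) = f n := by
    intro n
    rw [hfs n, map_smul, hf_eig n, smul_smul, inv_mul_cancel₀ (hcne n), one_smul]
  have hf_D : ∀ n : ℕ, D (f n) = (-((n : ℂ) + 1)) • f (n + 1) := by
    intro n
    rw [hfs n, smul_smul, mul_inv_cancel₀ (hcne n), one_smul]
  have hf_ne : ∀ n, f n ≠ 0 := by
    intro n; induction n with
    | zero => exact hu
    | succ n ih =>
      intro h
      exact ih (by rw [← hf_T n, h, map_zero])
  have hinj : Function.Injective (fun n : ℕ => -((n : ℂ) + 1)) := by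
    intro a b h
    simp only [neg_inj, add_left_inj] at h
    exact_mod_cast h
  obtain ⟨b, hb⟩ := build_basis T D hirr f (fun n => -((n : ℂ) + 1)) hinj hf_ne hf_eig
    (fun i => by
      cases i with
      | zero =>
        rw [show f 0 = u from rfl, hTu]
        exact Submodule.zero_mem _
      | succ n =>
        rw [hf_T n]
        exact Submodule.subset_span ⟨n, rfl⟩)
    (fun i => by rw [hf_D i]; exact Submodule.smul_mem _ _ (Submodule.subset_span ⟨i + 1, rfl⟩))
  apply basis_iso T D quotT quotD b
  · intro i
    cases i with
    | zero =>
      rw [hb 0]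
      show b.repr (T u) = quotT (Finsupp.single 0 1)
      rw [hTu, map_zero, quotT, Finsupp.lsum_single]
      simp
    | succ n =>
      rw [hb (n + 1), hf_T n, ← hb n, b.repr_self]
      rw [quotT, Finsupp.lsum_single]
      simp
  · intro i
    rw [hb i, hf_D i, map_smul, ← hb (i + 1), b.repr_self]
    rw [quotD, Finsupp.lsum_single, LinearMap.smul_apply, Finsupp.lsingle_apply]

lemma seedA (T D : Module.End ℂ V) (hDT : D * T - T * D = 1) :
    ∀ n : ℕ, ∀ v : V, v ≠ 0 → T (D v) = (n : ℂ) • v →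
      (∃ w : V, w ≠ 0 ∧ D w = 0) ∨ (∃ u : V, u ≠ 0 ∧ T u = 0 ∧ T (D u) = -u) := by
  have hDTa : ∀ x : V, D (T x) = T (D x) + x := comm_aux hDT
  intro n
  induction n with
  | zero =>
    intro v hv hveig
    rw [Nat.cast_zero, zero_smul] at hveig
    by_cases hD : D v = 0
    · exact Or.inl ⟨v, hv, hD⟩
    · refine Or.inr ⟨D v, hD, hveig, ?_⟩
      have h2 := hDTa (D v)
      rw [hveig, map_zero] at h2
      exact eq_neg_of_add_eq_zero_left h2.symm
  | succ n ih =>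
    intro v hv hveig
    have hne : ((n : ℂ) + 1) ≠ 0 := Nat.cast_add_one_ne_zero (R := ℂ) n
    have hDv : D v ≠ 0 := by
      intro h
      rw [h, map_zero] at hveig
      push_cast at hveig
      exact hv ((smul_eq_zero.1 hveig.symm).resolve_left hne)
    refine ih (D v) hDv ?_
    have h2 := hDTa (D v)
    rw [hveig, map_smul] at h2
    have h3 : T (D (D v)) = ((n + 1 : ℕ) : ℂ) • D v - D v := eq_sub_of_add_eq h2.symm
    rw [h3]; push_cast; module

lemma seedB (T D : Module.End ℂ V) (hDT : D * T - T * D = 1) :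
    ∀ n : ℕ, ∀ v : V, v ≠ 0 → T (D v) = (-((n : ℂ) + 1)) • v →
      (∃ w : V, w ≠ 0 ∧ D w = 0) ∨ (∃ u : V, u ≠ 0 ∧ T u = 0 ∧ T (D u) = -u) := by
  have hDTa : ∀ x : V, D (T x) = T (D x) + x := comm_aux hDT
  intro n
  induction n with
  | zero =>
    intro v hv hveig
    by_cases hT : T v = 0
    · exact Or.inr ⟨v, hv, hT, by rw [hveig]; push_cast; module⟩
    · refine Or.inl ⟨T v, hT, ?_⟩
      rw [hDTa v, hveig]
      push_cast; module
  | succ n ih =>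
    intro v hv hveig
    have hne : ((n : ℂ) + 1) ≠ 0 := Nat.cast_add_one_ne_zero (R := ℂ) n
    have hDTv : D (T v) = (-((n : ℂ) + 1)) • v := by
      rw [hDTa v, hveig]; push_cast; module
    have hTv : T v ≠ 0 := by
      intro h
      rw [h, map_zero] at hDTv
      exact hv ((smul_eq_zero.1 hDTv.symm).resolve_left
        (fun h => hne (by linear_combination -h)))
    refine ih (T v) hTv ?_
    have h4 : T (D (T v)) = (-((n : ℂ) + 1)) • T v := by
      rw [hDTv, map_smul]
    rw [h4]

end Cases2

/-- Every irreducible weight module over the rank-one Weyl algebra `𝔻₁` is isomorphic to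
exactly one of `t^λℂ[t^{±1}]` (`λ ∉ ℤ`, `λ` unique modulo `ℤ`), `ℂ[t]`, or
`ℂ[t^{±1}]/ℂ[t]`. -/
theorem weyl_weight_module_classification
    (V : Type*) [AddCommGroup V] [Module ℂ V] [Nontrivial V] (T D : Module.End ℂ V)
    (hDT : D * T - T * D = 1)
    (hirr : ∀ N : Submodule ℂ V, (∀ v ∈ N, T v ∈ N ∧ D v ∈ N) → N = ⊥ ∨ N = ⊤)
    (hweight : (⨆ μ : ℂ, (T * D).eigenspace μ) = ⊤) :
    ((∃ lam : ℂ, (∀ m : ℤ, lam ≠ (m : ℂ)) ∧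
        WeylIso V T D (ℤ →₀ ℂ) laurentT (laurentD lam) ∧
        (∀ mu : ℂ, (∀ m : ℤ, mu ≠ (m : ℂ)) →
          WeylIso V T D (ℤ →₀ ℂ) laurentT (laurentD mu) → ∃ m : ℤ, mu = lam + m)) ∧
      ¬ WeylIso V T D (ℕ →₀ ℂ) polyT polyD ∧ ¬ WeylIso V T D (ℕ →₀ ℂ) quotT quotD) ∨
    ((¬ ∃ lam : ℂ, (∀ m : ℤ, lam ≠ (m : ℂ)) ∧
        WeylIso V T D (ℤ →₀ ℂ) laurentT (laurentD lam)) ∧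
      WeylIso V T D (ℕ →₀ ℂ) polyT polyD ∧ ¬ WeylIso V T D (ℕ →₀ ℂ) quotT quotD) ∨
    ((¬ ∃ lam : ℂ, (∀ m : ℤ, lam ≠ (m : ℂ)) ∧
        WeylIso V T D (ℤ →₀ ℂ) laurentT (laurentD lam)) ∧
      ¬ WeylIso V T D (ℕ →₀ ℂ) polyT polyD ∧ WeylIso V T D (ℕ →₀ ℂ) quotT quotD) := by
  obtain ⟨μ, v, hv, hveig⟩ : ∃ (μ : ℂ) (v : V), v ≠ 0 ∧ T (D v) = μ • v := by
    by_contra hcon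
    push_neg at hcon
    have hbot : ∀ μ : ℂ, (T * D).eigenspace μ = ⊥ := by
      intro μ
      rw [eq_bot_iff]
      intro x hx
      rcases eq_or_ne x 0 with rfl | hx0
      · simp
      · exact absurd (by simpa [Module.End.mul_apply] using
          Module.End.mem_eigenspace_iff.1 hx) (hcon μ x hx0)
    have hsup : (⨆ μ : ℂ, (T * D).eigenspace μ) = (⊥ : Submodule ℂ V) := by simp [hbot]
    rw [hweight] at hsup
    obtain ⟨x, hx⟩ := exists_ne (0 : V)
    have hxt : x ∈ (⊤ : Submodule ℂ V) := Submodule.mem_top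
    rw [hsup] at hxt
    exact hx (by simpa using hxt)
  by_cases hint : ∃ m : ℤ, μ = (m : ℂ)
  · -- integral weight: `ℂ[t]` or the quotient module
    obtain ⟨m, rfl⟩ := hint
    have hseed : (∃ w : V, w ≠ 0 ∧ D w = 0) ∨
        (∃ u : V, u ≠ 0 ∧ T u = 0 ∧ T (D u) = -u) := by
      cases m with
      | ofNat n =>
        exact seedA T D hDT n v hv (by
          rw [hveig]; norm_num)
      | negSucc n =>
        exact seedB T D hDT n v hv (by
          rw [hveig, Int.cast_negSucc]; push_cast; ring_nf)
    rcases hseed with ⟨w, hw, hDw⟩ | ⟨u, hu, hTu, heu⟩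
    · -- polynomial case
      have hpoly := poly_case T D hDT hirr w hw hDw
      have h0 : HasEig T D 0 := weylIso_hasEig (weylIso_symm hpoly) poly_hasEig_zero
      refine Or.inr (Or.inl ⟨?_, hpoly, ?_⟩)
      · rintro ⟨lam, hlam, hlaur⟩
        obtain ⟨m', hm'⟩ := hasEig_laurent (weylIso_hasEig hlaur h0)
        exact hlam (-m') (by push_cast; linear_combination -hm')
      · intro hquot
        obtain ⟨j, hj⟩ := hasEig_quot (weylIso_hasEig hquot h0)
        exact Nat.cast_add_one_ne_zero (R := ℂ) j (by linear_combination hj)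
    · -- quotient case
      have hquot := quot_case T D hDT hirr u hu hTu heu
      have h1 : HasEig T D (-1) := weylIso_hasEig (weylIso_symm hquot) quot_hasEig_neg_one
      refine Or.inr (Or.inr ⟨?_, ?_, hquot⟩)
      · rintro ⟨lam, hlam, hlaur⟩
        obtain ⟨m', hm'⟩ := hasEig_laurent (weylIso_hasEig hlaur h1)
        exact hlam (-1 - m') (by push_cast; linear_combination -hm')
      · intro hpoly
        obtain ⟨j, hj⟩ := hasEig_poly (weylIso_hasEig hpoly h1)
        exact Nat.cast_add_one_ne_zero (R := ℂ) j (by linear_combination -hj)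
  · -- non-integral weight: Laurent case
    push_neg at hint
    have hlaur := laurent_case T D hDT hirr hint v hv hveig
    have hμ : HasEig T D μ := ⟨v, hv, hveig⟩
    refine Or.inl ⟨⟨μ, hint, hlaur, ?_⟩, ?_, ?_⟩
    · intro mu hmu hlaur'
      obtain ⟨m', hm'⟩ := hasEig_laurent (weylIso_hasEig hlaur' hμ)
      exact ⟨-m', by push_cast; linear_combination -hm'⟩
    · intro hpoly
      obtain ⟨j, hj⟩ := hasEig_poly (weylIso_hasEig hpoly hμ)
      exact hint j (by exact_mod_cast hj)
    · intro hquot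
      obtain ⟨j, hj⟩ := hasEig_quot (weylIso_hasEig hquot hμ)
      exact hint (-(j + 1)) (by push_cast; linear_combination hj)
end

section
/- Let M be an irreducible weight module with finite-dimensional weight spaces over the Schrödinger algebra 𝔰ₙ on which z acts by a nonzero scalar ż. If e acts locally nilpotently on M, then every xᵢ acts locally nilpotently on M; conversely, if some xᵢ acts locally nilpotently on M then e acts locally nilpotently on M. -/
open LinearMap

section SchrodingerHelpers

variable {M : Type*} [AddCommGroup M] [Module ℂ M]

/-- Adjoint action of an endomorphism `P` on the endomorphism algebra. -/
noncomputable def schrAd (P : Module.End ℂ M) :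
    Module.End ℂ M →ₗ[ℂ] Module.End ℂ M :=
  LinearMap.mulLeft ℂ P - LinearMap.mulRight ℂ P

lemma schrAd_apply (P B : Module.End ℂ M) : schrAd P B = P * B - B * P := by
  simp [schrAd]

lemma schrAd_mul (P A B : Module.End ℂ M) :
    schrAd P (A * B) = schrAd P A * B + A * schrAd P B := by
  simp only [schrAd_apply]; noncomm_ring

lemma schrAd_pow_succ (P : Module.End ℂ M) (j : ℕ) (B : Module.End ℂ M) :
    (schrAd P ^ (j + 1)) B = schrAd P ((schrAd P ^ j) B) := by
  rw [pow_succ', Module.End.mul_apply]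

lemma schrAd_commute (P a : Module.End ℂ M) (ha : Commute P a) (k : ℕ) :
    schrAd P (a ^ k) = 0 := by
  rw [schrAd_apply, sub_eq_zero]; exact (ha.pow_right k).eq

lemma pow_apply_zero_of_le (T : Module.End ℂ M) {a b : ℕ} (hab : a ≤ b) {w : M}
    (hw : (T ^ a) w = 0) : (T ^ b) w = 0 := by
  rw [← Nat.sub_add_cancel hab, pow_add, Module.End.mul_apply, hw, map_zero]

lemma unif_nilp (T : Module.End ℂ M) (hT : ∀ v : M, ∃ n : ℕ, (T ^ n) v = 0)
    (W : Submodule ℂ M) [FiniteDimensional ℂ W] :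
    ∃ N : ℕ, ∀ w ∈ W, (T ^ N) w = 0 := by
  let b := Module.finBasis ℂ W
  choose g hg using fun i => hT (b i : M)
  refine ⟨Finset.univ.sup g, fun w hw => ?_⟩
  have hker : ∀ i, ((b i : M)) ∈ LinearMap.ker (T ^ Finset.univ.sup g) := by
    intro i
    exact pow_apply_zero_of_le T (Finset.le_sup (Finset.mem_univ i)) (hg i)
  have hWspan : Submodule.span ℂ (Set.range fun i => (b i : M)) = W := by
    have h2 := congrArg (Submodule.map W.subtype) b.span_eq
    rwa [Submodule.map_span, Submodule.map_subtype_top, ← Set.range_comp] at h2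
  have hspan : W ≤ LinearMap.ker (T ^ Finset.univ.sup g) := by
    refine le_trans (le_of_eq hWspan.symm) (Submodule.span_le.mpr ?_)
    rintro _ ⟨i, rfl⟩
    exact hker i
  exact hspan hw

lemma shift_eig (H T : Module.End ℂ M) (t : ℂ) (hT : H * T - T * H = t • T)
    (μ : ℂ) (v : M) (hv : H v = μ • v) : H (T v) = (μ + t) • T v := by
  have h1 : H (T v) - T (H v) = t • T v := by
    have := congrArg (fun f : Module.End ℂ M => f v) hT
    simpa using this
  have h2 : H (T v) = T (H v) + t • T v := by rw [← h1]; abel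
  rw [h2, hv, map_smul, add_smul]

lemma trunc1 (P a : Module.End ℂ M) (ha2 : schrAd P (schrAd P a) = 0) :
    ∀ (j : ℕ) (G : Module.End ℂ M),
      (schrAd P ^ (j + 1)) (a * G) =
        a * (schrAd P ^ (j + 1)) G + ((j : ℂ) + 1) • (schrAd P a * (schrAd P ^ j) G) := by
  intro j
  induction j with
  | zero =>
    intro G
    simp only [zero_add, pow_one, pow_zero, Module.End.one_apply, schrAd_mul, Nat.cast_zero]
    module
  | succ j ih =>
    intro G
    rw [schrAd_pow_succ, ih, map_add, schrAd_mul, map_smul, schrAd_mul, ha2, zero_mul,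
      zero_add, ← schrAd_pow_succ, ← schrAd_pow_succ]
    push_cast
    module

lemma trunc2 (P a : Module.End ℂ M) (ha3 : schrAd P (schrAd P (schrAd P a)) = 0) :
    ∀ (j : ℕ) (G : Module.End ℂ M),
      (schrAd P ^ (j + 2)) (a * G) =
        a * (schrAd P ^ (j + 2)) G + ((j : ℂ) + 2) • (schrAd P a * (schrAd P ^ (j + 1)) G)
          + (((j + 2).choose 2 : ℕ) : ℂ) • (schrAd P (schrAd P a) * (schrAd P ^ j) G) := by
  intro j
  induction j with
  | zero =>
    intro G
    have h1 : (schrAd P ^ 2) (a * G) = schrAd P (schrAd P (a * G)) := by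
      rw [(by norm_num : (2 : ℕ) = 1 + 1), schrAd_pow_succ, pow_one]
    have h2 : (schrAd P ^ 2) G = schrAd P (schrAd P G) := by
      rw [(by norm_num : (2 : ℕ) = 1 + 1), schrAd_pow_succ, pow_one]
    rw [h1, schrAd_mul, map_add, schrAd_mul, schrAd_mul, h2]
    simp only [zero_add, pow_one, pow_zero, Module.End.one_apply]
    norm_num
    module
  | succ j ih =>
    intro G
    rw [schrAd_pow_succ, ih, map_add, map_add, schrAd_mul, map_smul, schrAd_mul,
      map_smul, schrAd_mul, ha3, zero_mul, zero_add, ← schrAd_pow_succ, ← schrAd_pow_succ,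
      ← schrAd_pow_succ]
    have hch : ((j + 3).choose 2 : ℂ) = ((j : ℂ) + 2) + ((j + 2).choose 2 : ℕ) := by
      rw [Nat.choose_succ_succ (j + 2) 1, Nat.choose_one_right]
      push_cast
      ring
    have hj31 : j + 1 + 2 = j + 3 := by ring
    have hj32 : j + 2 + 1 = j + 3 := by ring
    rw [hj31, hj32, hch]
    push_cast
    module

lemma identity1 (E X Y : Module.End ℂ M) (hEX : E * X = X * E)
    (hEY : E * Y - Y * E = X) :
    ∀ m : ℕ, (schrAd E ^ m) ((X * Y) ^ m) = ((m.factorial : ℕ) : ℂ) • X ^ (2 * m) := by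
  have hDX : schrAd E X = 0 := by rw [schrAd_apply, hEX, sub_self]
  have hDY : schrAd E Y = X := by rw [schrAd_apply, hEY]
  have hDXY : schrAd E (X * Y) = X * X := by
    rw [schrAd_mul, hDX, hDY, zero_mul, zero_add]
  have hDpow : ∀ k : ℕ, schrAd E (X ^ k) = 0 := schrAd_commute E X hEX
  have ha2 : schrAd E (schrAd E (X * Y)) = 0 := by
    rw [hDXY, ← pow_two]; exact hDpow 2
  intro m
  induction m with
  | zero => simp
  | succ m ih =>
    rw [pow_succ' (X * Y) m, trunc1 E (X * Y) ha2 m ((X * Y) ^ m), ih,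
      schrAd_pow_succ, ih, map_smul, hDpow (2 * m), smul_zero, mul_zero, zero_add,
      hDXY]
    rw [mul_smul_comm, smul_smul]
    have hX : X * X * X ^ (2 * m) = X ^ (2 * (m + 1)) := by
      rw [← pow_two, ← pow_add]; congr 1; ring
    rw [hX]
    congr 1
    rw [Nat.factorial_succ]
    push_cast
    ring

lemma identity2 (E X Y : Module.End ℂ M) (zd : ℂ) (hXE : X * E = E * X)
    (hXY : X * Y - Y * X = zd • 1) :
    ∀ m : ℕ, (schrAd X ^ (2 * m)) ((E * (Y * Y)) ^ m) =
        ((((2 * m).factorial : ℕ) : ℂ) * zd ^ (2 * m)) • E ^ m ∧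
      (schrAd X ^ (2 * m + 1)) ((E * (Y * Y)) ^ m) = 0 := by
  have hDE : schrAd X E = 0 := by rw [schrAd_apply, hXE, sub_self]
  have hDY : schrAd X Y = zd • 1 := by rw [schrAd_apply, hXY]
  have hDYY : schrAd X (Y * Y) = (2 * zd) • Y := by
    rw [schrAd_mul, hDY, smul_mul_assoc, mul_smul_comm, one_mul, mul_one, ← add_smul]
    ring_nf
  have hDA : schrAd X (E * (Y * Y)) = (2 * zd) • (E * Y) := by
    rw [schrAd_mul, hDE, zero_mul, zero_add, hDYY, mul_smul_comm]
  have hDA2 : schrAd X (schrAd X (E * (Y * Y))) = (2 * zd ^ 2) • E := by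
    rw [hDA, map_smul, schrAd_mul, hDE, zero_mul, zero_add, hDY, mul_smul_comm,
      mul_one, smul_smul]
    congr 1
    ring
  have ha3 : schrAd X (schrAd X (schrAd X (E * (Y * Y)))) = 0 := by
    rw [hDA2, map_smul, hDE, smul_zero]
  have hDEpow : ∀ k : ℕ, schrAd X (E ^ k) = 0 := schrAd_commute X E hXE
  intro m
  induction m with
  | zero =>
    constructor
    · simp
    · simp only [Nat.mul_zero, Nat.zero_add, pow_one, pow_zero]
      rw [schrAd_apply]
      noncomm_ring
  | succ m ih =>
    have h2m : 2 * (m + 1) = 2 * m + 2 := by ring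
    have hchoose : ((2 * m + 2).choose 2 : ℕ) = (m + 1) * (2 * m + 1) := by
      rw [Nat.choose_two_right]
      have h1 : 2 * m + 2 - 1 = 2 * m + 1 := by omega
      rw [h1]
      have h2 : (2 * m + 2) * (2 * m + 1) = ((m + 1) * (2 * m + 1)) * 2 := by ring
      rw [h2, Nat.mul_div_cancel _ (by norm_num)]
    have hfact : ((2 * m + 2).factorial : ℕ)
        = (2 * m + 2) * ((2 * m + 1) * (2 * m).factorial) := by
      rw [show 2 * m + 2 = (2 * m + 1) + 1 from rfl, Nat.factorial_succ, Nat.factorial_succ]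
    have hfirst : (schrAd X ^ (2 * (m + 1))) ((E * (Y * Y)) ^ (m + 1)) =
        ((((2 * (m + 1)).factorial : ℕ) : ℂ) * zd ^ (2 * (m + 1))) • E ^ (m + 1) := by
      rw [h2m, pow_succ' (E * (Y * Y)) m,
        trunc2 X (E * (Y * Y)) ha3 (2 * m) ((E * (Y * Y)) ^ m),
        show 2 * m + 2 = (2 * m + 1) + 1 from rfl, schrAd_pow_succ, ih.2, map_zero,
        ih.1, hDA2]
      simp only [mul_zero, smul_zero, zero_add, add_zero]
      rw [smul_mul_assoc, mul_smul_comm, ← pow_succ' E m, smul_smul, smul_smul]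
      congr 1
      rw [hchoose, hfact]
      push_cast
      ring
    refine ⟨hfirst, ?_⟩
    rw [show 2 * (m + 1) + 1 = (2 * (m + 1)) + 1 from rfl, schrAd_pow_succ, hfirst,
      map_smul, hDEpow (m + 1), smul_zero]

lemma neg_mulRight_pow (P : Module.End ℂ M) (j : ℕ) (B : Module.End ℂ M) :
    ((-LinearMap.mulRight ℂ P) ^ j) B = ((-1 : ℂ) ^ j) • (B * P ^ j) := by
  induction j with
  | zero => simp
  | succ j ih =>
    rw [pow_succ', Module.End.mul_apply, ih, map_smul, LinearMap.neg_apply,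
      LinearMap.mulRight_apply, pow_succ, pow_succ, mul_assoc]
    rw [smul_neg, ← neg_smul]
    congr 1
    ring

lemma core (H P A : Module.End ℂ M)
    (hfd : ∀ μ : ℂ, FiniteDimensional ℂ (H.eigenspace μ))
    (p : ℂ)
    (hP : ∀ (μ : ℂ) (v : M), H v = μ • v → H (P v) = (μ + p) • P v)
    (hA : ∀ (μ : ℂ) (v : M), H v = μ • v → H (A v) = μ • A v)
    (hPnil : ∀ v : M, ∃ n : ℕ, (P ^ n) v = 0)
    (lam : ℂ) (v : M) (hv : H v = lam • v) :
    ∃ n₀ : ℕ, ∀ n, n₀ ≤ n → ∀ mm : ℕ, ((schrAd P ^ n) (A ^ mm)) v = 0 := by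
  have hPpow : ∀ (k : ℕ) (μ : ℂ) (w : M), H w = μ • w →
      H ((P ^ k) w) = (μ + k * p) • (P ^ k) w := by
    intro k
    induction k with
    | zero => intro μ w hw; simpa using hw
    | succ k ih =>
      intro μ w hw
      have h1 : (P ^ (k + 1)) w = P ((P ^ k) w) := by
        rw [pow_succ', Module.End.mul_apply]
      rw [h1, hP (μ + k * p) ((P ^ k) w) (ih μ w hw)]
      congr 1
      push_cast
      ring
  have hApow : ∀ (mm : ℕ) (μ : ℂ) (w : M), H w = μ • w →
      H ((A ^ mm) w) = μ • (A ^ mm) w := by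
    intro mm
    induction mm with
    | zero => intro μ w hw; simpa using hw
    | succ mm ih =>
      intro μ w hw
      have h1 : (A ^ (mm + 1)) w = A ((A ^ mm) w) := by
        rw [pow_succ', Module.End.mul_apply]
      rw [h1, hA μ ((A ^ mm) w) (ih μ w hw)]
  obtain ⟨N, hN⟩ := hPnil v
  have hU : ∀ j : ℕ, ∃ Nj : ℕ, ∀ w ∈ H.eigenspace (lam + j * p), (P ^ Nj) w = 0 := by
    intro j
    haveI := hfd (lam + j * p)
    exact unif_nilp P hPnil _
  choose Nf hNf using hU
  refine ⟨N + (Finset.range N).sup Nf, fun n hn mm => ?_⟩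
  set NB := (Finset.range N).sup Nf with hNB
  have key : ∀ k : ℕ, k ≤ n → (P ^ k) ((A ^ mm) ((P ^ (n - k)) v)) = 0 := by
    intro k hk
    by_cases hbig : N ≤ n - k
    · rw [pow_apply_zero_of_le P hbig hN, map_zero, map_zero]
    · push_neg at hbig
      set j := n - k with hj
      have hw : H ((A ^ mm) ((P ^ j) v)) = (lam + j * p) • ((A ^ mm) ((P ^ j) v)) :=
        hApow mm _ _ (hPpow j lam v hv)
      have hmem : (A ^ mm) ((P ^ j) v) ∈ H.eigenspace (lam + j * p) :=
        Module.End.mem_eigenspace_iff.mpr hw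
      have hkill : (P ^ Nf j) ((A ^ mm) ((P ^ j) v)) = 0 := hNf j _ hmem
      have hle : Nf j ≤ k := by
        have h1 : Nf j ≤ NB := Finset.le_sup (Finset.mem_range.mpr hbig)
        omega
      exact pow_apply_zero_of_le P hle hkill
  set l : Module.End ℂ (Module.End ℂ M) := LinearMap.mulLeft ℂ P with hl
  set r : Module.End ℂ (Module.End ℂ M) := LinearMap.mulRight ℂ P with hr
  have hcomm0 : Commute l r := LinearMap.commute_mulLeft_right P P
  have hcomm : Commute l (-r) := Commute.neg_right hcomm0
  have hsub : schrAd P = l + -r := by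
    rw [schrAd, sub_eq_add_neg]
  rw [hsub, hcomm.add_pow n, LinearMap.sum_apply, LinearMap.sum_apply]
  refine Finset.sum_eq_zero fun k hk => ?_
  have hk' : k ≤ n := Nat.lt_succ_iff.mp (Finset.mem_range.mp hk)
  rw [Module.End.mul_apply, Module.End.mul_apply, Module.End.natCast_apply,
    map_nsmul, map_nsmul, neg_mulRight_pow, map_smul, LinearMap.pow_mulLeft,
    LinearMap.mulLeft_apply]
  rw [LinearMap.smul_apply, LinearMap.smul_apply]
  have h0 : (P ^ k * ((A ^ mm) * P ^ (n - k))) v = 0 := by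
    rw [Module.End.mul_apply, Module.End.mul_apply]
    exact key k hk'
  rw [h0, smul_zero, smul_zero]

lemma main_dir (Hm Pm Am Qm : Module.End ℂ M) (p : ℂ)
    (hweight : (⨆ μ : ℂ, Hm.eigenspace μ) = ⊤)
    (hfd : ∀ μ : ℂ, FiniteDimensional ℂ (Hm.eigenspace μ))
    (hP : ∀ (μ : ℂ) (v : M), Hm v = μ • v → Hm (Pm v) = (μ + p) • Pm v)
    (hA : ∀ (μ : ℂ) (v : M), Hm v = μ • v → Hm (Am v) = μ • Am v)
    (hPnil : ∀ v : M, ∃ n : ℕ, (Pm ^ n) v = 0)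
    (ident : ∀ n₀ : ℕ, ∃ (c : ℂ) (k t m : ℕ), c ≠ 0 ∧ n₀ ≤ t ∧
        (schrAd Pm ^ t) (Am ^ m) = c • Qm ^ k) :
    ∀ v : M, ∃ k : ℕ, (Qm ^ k) v = 0 := by
  intro v
  have hv : v ∈ ⨆ μ : ℂ, Hm.eigenspace μ := by rw [hweight]; trivial
  refine Submodule.iSup_induction (motive := fun w : M => ∃ k : ℕ, (Qm ^ k) w = 0)
    _ hv ?_ ⟨0, by simp⟩ ?_
  · intro μ w hw
    have hw' : Hm w = μ • w := Module.End.mem_eigenspace_iff.mp hw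
    obtain ⟨n₀, hn₀⟩ := core Hm Pm Am hfd p hP hA hPnil μ w hw'
    obtain ⟨c, k, t, m, hc, ht, hid⟩ := ident n₀
    have h0 : ((schrAd Pm ^ t) (Am ^ m)) w = 0 := hn₀ t ht m
    rw [hid, LinearMap.smul_apply] at h0
    refine ⟨k, ?_⟩
    rcases smul_eq_zero.mp h0 with h | h
    · exact absurd h hc
    · exact h
  · rintro x y ⟨kx, hx⟩ ⟨ky, hy⟩
    exact ⟨max kx ky, by
      rw [map_add, pow_apply_zero_of_le Qm (le_max_left kx ky) hx,
        pow_apply_zero_of_le Qm (le_max_right kx ky) hy, add_zero]⟩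

end SchrodingerHelpers
/-- A realization of the Schrödinger Lie algebra `𝔰ₙ = (𝔰𝔩₂ ⊕ 𝔰𝔬ₙ) ⋉ 𝔥ₙ` inside a complex
Lie algebra `L`: distinguished elements satisfying the full bracket table of `𝔰ₙ`. -/
structure SchrodingerRel (n : ℕ) (L : Type*) [LieRing L] [LieAlgebra ℂ L] where
  e : L
  f : L
  h : L
  z : L
  x : Fin n → L
  y : Fin n → L
  s : Fin n → Fin n → L
  s_skew : ∀ i j, s j i = -s i j
  lie_h_e : ⁅h, e⁆ = (2 : ℂ) • e
  lie_h_f : ⁅h, f⁆ = -((2 : ℂ) • f)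
  lie_e_f : ⁅e, f⁆ = h
  lie_h_x : ∀ i, ⁅h, x i⁆ = x i
  lie_h_y : ∀ i, ⁅h, y i⁆ = -y i
  lie_e_x : ∀ i, ⁅e, x i⁆ = 0
  lie_e_y : ∀ i, ⁅e, y i⁆ = x i
  lie_f_x : ∀ i, ⁅f, x i⁆ = y i
  lie_f_y : ∀ i, ⁅f, y i⁆ = 0
  lie_x_x : ∀ i j, ⁅x i, x j⁆ = 0
  lie_y_y : ∀ i j, ⁅y i, y j⁆ = 0
  lie_x_y : ∀ i j, ⁅x i, y j⁆ = if i = j then z else 0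
  lie_s_e : ∀ i j, ⁅s i j, e⁆ = 0
  lie_s_f : ∀ i j, ⁅s i j, f⁆ = 0
  lie_s_h : ∀ i j, ⁅s i j, h⁆ = 0
  lie_s_x : ∀ k l i, ⁅s k l, x i⁆ = (if l = i then x k else 0) - (if k = i then x l else 0)
  lie_s_y : ∀ k l i, ⁅s k l, y i⁆ = (if l = i then y k else 0) - (if k = i then y l else 0)
  lie_s_s : ∀ i j k l, ⁅s i j, s k l⁆ =
    (if k = j then s i l else 0) + (if i = l then s j k else 0) +
      (if l = j then s k i else 0) + (if k = i then s l j else 0)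
  lie_z : ∀ a : L, ⁅z, a⁆ = 0

/-- The index type for the standard basis of `𝔰ₙ`:
`e, f, h, z`, the `xᵢ`, the `yᵢ`, and the `s_{ij}` with `i < j`. -/
def SchrodingerIdx (n : ℕ) : Type :=
  Fin 4 ⊕ Fin n ⊕ Fin n ⊕ {p : Fin n × Fin n // p.1 < p.2}

/-- The standard basis family of `𝔰ₙ` attached to a Schrödinger realization. -/
def SchrodingerRel.basisFam {n : ℕ} {L : Type*} [LieRing L] [LieAlgebra ℂ L]
    (S : SchrodingerRel n L) : SchrodingerIdx n → L :=
  Sum.elim ![S.e, S.f, S.h, S.z]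
    (Sum.elim S.x (Sum.elim S.y fun p => S.s p.1.1 p.1.2))

/-- For an irreducible weight `𝔰ₙ`-module `M` with finite dimensional weight spaces and
nonzero central charge `ż`: if `e` acts locally nilpotently then so does every `xᵢ`, and
conversely if some `xᵢ` acts locally nilpotently then so does `e`. -/
theorem e_locally_nilpotent_iff_x (n : ℕ) (L : Type*) [LieRing L] [LieAlgebra ℂ L]
    (S : SchrodingerRel n L)
    (hspan : Submodule.span ℂ (Set.range S.basisFam) = ⊤)
    (M : Type*) [AddCommGroup M] [Module ℂ M] [LieRingModule L M] [LieModule ℂ L M]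
    [LieModule.IsIrreducible ℂ L M]
    (hweight : (⨆ μ : ℂ, (LieModule.toEnd ℂ L M S.h).eigenspace μ) = ⊤)
    (hfd : ∀ μ : ℂ, FiniteDimensional ℂ ((LieModule.toEnd ℂ L M S.h).eigenspace μ))
    (zdot : ℂ) (hzdot : zdot ≠ 0) (hz : ∀ v : M, ⁅S.z, v⁆ = zdot • v) :
    ((∀ v : M, ∃ m : ℕ, ((LieModule.toEnd ℂ L M S.e) ^ m) v = 0) →
        ∀ i, ∀ v : M, ∃ m : ℕ, ((LieModule.toEnd ℂ L M (S.x i)) ^ m) v = 0) ∧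
      ((∃ i, ∀ v : M, ∃ m : ℕ, ((LieModule.toEnd ℂ L M (S.x i)) ^ m) v = 0) →
        ∀ v : M, ∃ m : ℕ, ((LieModule.toEnd ℂ L M S.e) ^ m) v = 0) := by
  classical
  have hbr : ∀ a b : L, LieModule.toEnd ℂ L M a * LieModule.toEnd ℂ L M b
      - LieModule.toEnd ℂ L M b * LieModule.toEnd ℂ L M a = LieModule.toEnd ℂ L M ⁅a, b⁆ := by
    intro a b
    ext v
    simp only [Module.End.mul_apply, LinearMap.sub_apply, LieModule.toEnd_apply_apply, lie_lie]
  have hzE : LieModule.toEnd ℂ L M S.z = zdot • (1 : Module.End ℂ M) := by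
    ext w
    rw [LieModule.toEnd_apply_apply, hz w]
    simp
  have hHE : LieModule.toEnd ℂ L M S.h * LieModule.toEnd ℂ L M S.e
      - LieModule.toEnd ℂ L M S.e * LieModule.toEnd ℂ L M S.h
      = (2 : ℂ) • LieModule.toEnd ℂ L M S.e := by
    rw [hbr, S.lie_h_e, map_smul]
  have hHX : ∀ i, LieModule.toEnd ℂ L M S.h * LieModule.toEnd ℂ L M (S.x i)
      - LieModule.toEnd ℂ L M (S.x i) * LieModule.toEnd ℂ L M S.h
      = (1 : ℂ) • LieModule.toEnd ℂ L M (S.x i) := by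
    intro i
    rw [hbr, S.lie_h_x i, one_smul]
  have hHY : ∀ i, LieModule.toEnd ℂ L M S.h * LieModule.toEnd ℂ L M (S.y i)
      - LieModule.toEnd ℂ L M (S.y i) * LieModule.toEnd ℂ L M S.h
      = (-1 : ℂ) • LieModule.toEnd ℂ L M (S.y i) := by
    intro i
    rw [hbr, S.lie_h_y i, map_neg, neg_one_smul]
  have hEX : ∀ i, LieModule.toEnd ℂ L M S.e * LieModule.toEnd ℂ L M (S.x i)
      = LieModule.toEnd ℂ L M (S.x i) * LieModule.toEnd ℂ L M S.e := by
    intro i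
    have h1 := hbr S.e (S.x i)
    rw [S.lie_e_x i, map_zero] at h1
    exact sub_eq_zero.mp h1
  have hEY : ∀ i, LieModule.toEnd ℂ L M S.e * LieModule.toEnd ℂ L M (S.y i)
      - LieModule.toEnd ℂ L M (S.y i) * LieModule.toEnd ℂ L M S.e
      = LieModule.toEnd ℂ L M (S.x i) := by
    intro i
    have h1 := hbr S.e (S.y i)
    rwa [S.lie_e_y i] at h1
  have hXY : ∀ i, LieModule.toEnd ℂ L M (S.x i) * LieModule.toEnd ℂ L M (S.y i)
      - LieModule.toEnd ℂ L M (S.y i) * LieModule.toEnd ℂ L M (S.x i)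
      = zdot • (1 : Module.End ℂ M) := by
    intro i
    have h1 := hbr (S.x i) (S.y i)
    have h2 : ⁅S.x i, S.y i⁆ = S.z := by rw [S.lie_x_y]; simp
    rwa [h2, hzE] at h1
  -- eigenvector shift lemmas
  have hPE : ∀ (μ : ℂ) (v : M), LieModule.toEnd ℂ L M S.h v = μ • v →
      LieModule.toEnd ℂ L M S.h (LieModule.toEnd ℂ L M S.e v)
        = (μ + 2) • LieModule.toEnd ℂ L M S.e v :=
    fun μ v hv => shift_eig _ _ 2 hHE μ v hv
  have hPX : ∀ i (μ : ℂ) (v : M), LieModule.toEnd ℂ L M S.h v = μ • v →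
      LieModule.toEnd ℂ L M S.h (LieModule.toEnd ℂ L M (S.x i) v)
        = (μ + 1) • LieModule.toEnd ℂ L M (S.x i) v :=
    fun i μ v hv => shift_eig _ _ 1 (hHX i) μ v hv
  have hPY : ∀ i (μ : ℂ) (v : M), LieModule.toEnd ℂ L M S.h v = μ • v →
      LieModule.toEnd ℂ L M S.h (LieModule.toEnd ℂ L M (S.y i) v)
        = (μ + -1) • LieModule.toEnd ℂ L M (S.y i) v :=
    fun i μ v hv => shift_eig _ _ (-1) (hHY i) μ v hv
  have hAXY : ∀ i (μ : ℂ) (v : M), LieModule.toEnd ℂ L M S.h v = μ • v →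
      LieModule.toEnd ℂ L M S.h
          ((LieModule.toEnd ℂ L M (S.x i) * LieModule.toEnd ℂ L M (S.y i)) v)
        = μ • (LieModule.toEnd ℂ L M (S.x i) * LieModule.toEnd ℂ L M (S.y i)) v := by
    intro i μ v hv
    have h1 := hPY i μ v hv
    have h2 := hPX i (μ + -1) _ h1
    rw [show μ + -1 + 1 = μ by ring] at h2
    rw [Module.End.mul_apply]
    exact h2
  have hAEYY : ∀ i (μ : ℂ) (v : M), LieModule.toEnd ℂ L M S.h v = μ • v →
      LieModule.toEnd ℂ L M S.h
          ((LieModule.toEnd ℂ L M S.e *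
            (LieModule.toEnd ℂ L M (S.y i) * LieModule.toEnd ℂ L M (S.y i))) v)
        = μ • (LieModule.toEnd ℂ L M S.e *
            (LieModule.toEnd ℂ L M (S.y i) * LieModule.toEnd ℂ L M (S.y i))) v := by
    intro i μ v hv
    have h1 := hPY i μ v hv
    have h2 := hPY i (μ + -1) _ h1
    have h3 := hPE (μ + -1 + -1) _ h2
    rw [show μ + -1 + -1 + 2 = μ by ring] at h3
    rw [Module.End.mul_apply, Module.End.mul_apply]
    exact h3
  constructor
  · -- e locally nilpotent implies each x i locally nilpotent
    intro hEnil i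
    refine main_dir (LieModule.toEnd ℂ L M S.h) (LieModule.toEnd ℂ L M S.e)
      (LieModule.toEnd ℂ L M (S.x i) * LieModule.toEnd ℂ L M (S.y i))
      (LieModule.toEnd ℂ L M (S.x i)) 2 hweight hfd hPE (hAXY i) hEnil ?_
    intro n₀
    refine ⟨((n₀.factorial : ℕ) : ℂ), 2 * n₀, n₀, n₀, ?_, le_refl n₀,
      identity1 _ _ _ (hEX i) (hEY i) n₀⟩
    exact_mod_cast Nat.cast_ne_zero.mpr (Nat.factorial_ne_zero n₀)
  · -- some x i locally nilpotent implies e locally nilpotent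
    rintro ⟨i, hXnil⟩
    refine main_dir (LieModule.toEnd ℂ L M S.h) (LieModule.toEnd ℂ L M (S.x i))
      (LieModule.toEnd ℂ L M S.e *
        (LieModule.toEnd ℂ L M (S.y i) * LieModule.toEnd ℂ L M (S.y i)))
      (LieModule.toEnd ℂ L M S.e) 1 hweight hfd (hPX i) (hAEYY i) hXnil ?_
    intro n₀
    refine ⟨(((2 * n₀).factorial : ℕ) : ℂ) * zdot ^ (2 * n₀), n₀, 2 * n₀, n₀, ?_,
      by omega, (identity2 _ _ _ zdot (hEX i).symm (hXY i) n₀).1⟩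
    exact mul_ne_zero (Nat.cast_ne_zero.mpr (Nat.factorial_ne_zero _))
      (pow_ne_zero _ hzdot)
end
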